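/- arXiv:1102.2072 — 2 statements merged into one kernel-verified Lean document; each statement's English description precedes it below -/
import Mathlib

section
/- For every pair (n, r) with n ≥ 2 an integer and r > 0 real: if E|T_n|^r is finite, then E|T_{n+1}|^r is finite. -/
open MeasureTheory ProbabilityTheory Filter

noncomputable section

/-- The partial sum `S_n = ∑_{i=1}^n X_i`. -/
def Sn {Ω : Type*} (X : ℕ → Ω → ℝ) (n : ℕ) (ω : Ω) : ℝ :=
  ∑ i ∈ Finset.range n, X i ω

/-- `V_n = (∑_{i=1}^n X_i²)^{1/2}`. -/
def Vn {Ω : Type*} (X : ℕ → Ω → ℝ) (n : ℕ) (ω : Ω) : ℝ :=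
  Real.sqrt (∑ i ∈ Finset.range n, (X i ω) ^ 2)

/-- The sample variance `σ̂_n² = (1/(n-1)) ∑_{i=1}^n (X_i - S_n/n)²`. -/
def sigmaSq {Ω : Type*} (X : ℕ → Ω → ℝ) (n : ℕ) (ω : Ω) : ℝ :=
  (1 / ((n : ℝ) - 1)) * ∑ i ∈ Finset.range n, (X i ω - Sn X n ω / n) ^ 2

/-- Student's t-statistic `T_n = n^{-1/2} σ̂_n^{-1} S_n` when `σ̂_n > 0`, and `0` otherwise. -/
def Tstat {Ω : Type*} (X : ℕ → Ω → ℝ) (n : ℕ) (ω : Ω) : ℝ :=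
  if 0 < sigmaSq X n ω then Sn X n ω / (Real.sqrt n * Real.sqrt (sigmaSq X n ω)) else 0

/-- `U_n* = (S_n/V_n)²` if `V_n > 0` and `(S_n/V_n)² ≠ n`, and `U_n* = 0` otherwise. -/
def Ustar {Ω : Type*} (X : ℕ → Ω → ℝ) (n : ℕ) (ω : Ω) : ℝ :=
  if 0 < Vn X n ω ∧ (Sn X n ω / Vn X n ω) ^ 2 ≠ (n : ℝ) then (Sn X n ω / Vn X n ω) ^ 2 else 0

/-!
For a sample `x₀, …, x_n` write `S = ∑ xᵢ` and `D = (n + 1) ∑ xᵢ² - S² = n (n + 1) σ̂²`, and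
`S_k`, `D_k`, `t_k` for the sum, the same quadratic form and the t-statistic of the sample with
`x_k` removed. Then `T_{n+1}² D = n S²`, `t_k² D_k = (n - 1) S_k²`,
`n D = (n + 1) D_k + (S - (n + 1) x_k)²` and `∑ₖ D_k = (n - 1) D`. If `D > 0`, some `D_k` is
positive, and `n S = (n + 1) S_k - (S - (n + 1) x_k)` gives `T_{n+1}² ≤ (n + 1)² (1 + t_k²)`.
Hence `|T_{n+1}|^r ≤ C (1 + ∑ₖ |t_k|^r)` pointwise, and each `t_k` is the t-statistic of `n`
i.i.d. copies of `X₀`, so it has the law of `T_n`.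
-/

open Finset

def Nat.succAbove (k j : ℕ) : ℕ := if j < k then j else j + 1

lemma Nat.succAbove_injective (k : ℕ) : Function.Injective k.succAbove := by
  intro i j h
  unfold Nat.succAbove at h
  split_ifs at h <;> omega

lemma Nat.sum_range_comp_succAbove {M : Type*} [AddCommGroup M] (f : ℕ → M) {n k : ℕ}
    (hk : k < n + 1) :
    ∑ j ∈ range n, f (k.succAbove j) = ∑ i ∈ range (n + 1), f i - f k := by
  induction n with
  | zero => simp [show k = 0 by omega]
  | succ n ih =>
    rcases Nat.lt_or_ge k (n + 1) with hk' | hk'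
    · rw [sum_range_succ, ih hk', sum_range_succ _ (n + 1),
        show k.succAbove n = n + 1 from if_neg (by omega)]
      abel
    · obtain rfl : k = n + 1 := by omega
      rw [sum_range_succ _ (n + 1), add_sub_cancel_right]
      exact sum_congr rfl fun j hj => by
        rw [Nat.succAbove, if_pos (mem_range.1 hj)]

section Sample

variable {Ω : Type*} (X : ℕ → Ω → ℝ) (n : ℕ) (ω : Ω)

def sigmaSqNum : ℝ := n * Vn X n ω ^ 2 - Sn X n ω ^ 2

lemma Vn_sq : Vn X n ω ^ 2 = ∑ i ∈ range n, X i ω ^ 2 :=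
  Real.sq_sqrt (sum_nonneg fun _ _ => sq_nonneg _)

lemma sigmaSq_eq_sigmaSqNum_div : sigmaSq X n ω = sigmaSqNum X n ω / (n * (n - 1)) := by
  rcases Nat.eq_zero_or_pos n with rfl | hn
  · simp [sigmaSq, sigmaSqNum, Sn]
  have hn' : (n : ℝ) ≠ 0 := by positivity
  have hdev :
      ∑ i ∈ range n, (X i ω - Sn X n ω / n) ^ 2 = Vn X n ω ^ 2 - Sn X n ω ^ 2 / n := by
    simp only [sub_sq, sum_add_distrib, sum_sub_distrib, ← sum_mul, ← mul_sum, sum_const,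
      card_range, nsmul_eq_mul, Vn_sq]
    rw [show ∑ i ∈ range n, X i ω = Sn X n ω from rfl]
    field_simp
    ring
  rw [sigmaSq, hdev, sigmaSqNum, ← div_div, sub_div, mul_div_cancel_left₀ _ hn',
    one_div_mul_eq_div]

lemma tstat_eq_zero_of_sigmaSqNum_nonpos (h : sigmaSqNum X n ω ≤ 0) : Tstat X n ω = 0 := by
  have hσ : sigmaSq X n ω ≤ 0 := by
    rw [sigmaSq_eq_sigmaSqNum_div]
    rcases n with _ | n
    · simp
    · refine div_nonpos_of_nonpos_of_nonneg h ?_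
      rw [Nat.cast_succ, add_sub_cancel_right]
      positivity
  simp [Tstat, hσ.not_gt]

lemma tstat_sq_mul_sigmaSqNum {n : ℕ} (hn : 2 ≤ n) (h : 0 < sigmaSqNum X n ω) :
    Tstat X n ω ^ 2 * sigmaSqNum X n ω = (n - 1) * Sn X n ω ^ 2 := by
  have hn1 : (1 : ℝ) < n := by exact_mod_cast hn
  have hσ : 0 < sigmaSq X n ω := by
    rw [sigmaSq_eq_sigmaSqNum_div]
    exact div_pos h (mul_pos (by linarith) (by linarith))
  rw [Tstat, if_pos hσ, div_pow, mul_pow, Real.sq_sqrt (Nat.cast_nonneg n),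
    Real.sq_sqrt hσ.le, sigmaSq_eq_sigmaSqNum_div]
  field_simp

end Sample

section LeaveOneOut

variable {Ω : Type*} (X : ℕ → Ω → ℝ) {n k : ℕ} (ω : Ω)

lemma Sn_comp_succAbove (hk : k < n + 1) :
    Sn (fun i => X (k.succAbove i)) n ω = Sn X (n + 1) ω - X k ω :=
  Nat.sum_range_comp_succAbove (X · ω) hk

lemma Vn_comp_succAbove_sq (hk : k < n + 1) :
    Vn (fun i => X (k.succAbove i)) n ω ^ 2 = Vn X (n + 1) ω ^ 2 - X k ω ^ 2 := by
  simp only [Vn_sq]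
  exact Nat.sum_range_comp_succAbove (X · ω ^ 2) hk

lemma sigmaSqNum_comp_succAbove (hk : k < n + 1) :
    sigmaSqNum (fun i => X (k.succAbove i)) n ω
      = n * (Vn X (n + 1) ω ^ 2 - X k ω ^ 2) - (Sn X (n + 1) ω - X k ω) ^ 2 := by
  rw [sigmaSqNum, Sn_comp_succAbove X ω hk, Vn_comp_succAbove_sq X ω hk]

lemma sum_sigmaSqNum_comp_succAbove :
    ∑ k ∈ range (n + 1), sigmaSqNum (fun i => X (k.succAbove i)) n ω
      = (n - 1) * sigmaSqNum X (n + 1) ω := by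
  rw [sum_congr rfl fun k hk => sigmaSqNum_comp_succAbove X ω (mem_range.1 hk)]
  simp only [sub_sq, mul_sub, sum_add_distrib, sum_sub_distrib, ← mul_sum,
    sum_const, card_range, nsmul_eq_mul, sigmaSqNum]
  rw [← Vn_sq, show ∑ i ∈ range (n + 1), X i ω = Sn X (n + 1) ω from rfl]
  push_cast
  ring

lemma exists_sigmaSqNum_comp_succAbove_pos (hn : 2 ≤ n) (h : 0 < sigmaSqNum X (n + 1) ω) :
    ∃ k < n + 1, 0 < sigmaSqNum (fun i => X (k.succAbove i)) n ω := by
  have hsum : ∑ _k ∈ range (n + 1), (0 : ℝ)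
      < ∑ k ∈ range (n + 1), sigmaSqNum (fun i => X (k.succAbove i)) n ω := by
    rw [sum_sigmaSqNum_comp_succAbove, sum_const_zero]
    exact mul_pos (by rw [sub_pos]; exact_mod_cast hn) h
  obtain ⟨k, hk, hpos⟩ := exists_lt_of_sum_lt hsum
  exact ⟨k, mem_range.1 hk, hpos⟩

lemma mul_sigmaSqNum_succ (hk : k < n + 1) :
    n * sigmaSqNum X (n + 1) ω = (n + 1) * sigmaSqNum (fun i => X (k.succAbove i)) n ω
      + (Sn X (n + 1) ω - (n + 1) * X k ω) ^ 2 := by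
  rw [sigmaSqNum_comp_succAbove X ω hk, sigmaSqNum]
  push_cast
  ring

end LeaveOneOut

lemma exists_tstat_succ_sq_le {Ω : Type*} (X : ℕ → Ω → ℝ) {n : ℕ} (hn : 2 ≤ n)
    (ω : Ω) :
    ∃ k < n + 1, Tstat X (n + 1) ω ^ 2
      ≤ (n + 1) ^ 2 * (1 + Tstat (fun i => X (k.succAbove i)) n ω ^ 2) := by
  rcases le_or_gt (sigmaSqNum X (n + 1) ω) 0 with hD | hD
  · refine ⟨0, n.succ_pos, ?_⟩
    rw [tstat_eq_zero_of_sigmaSqNum_nonpos X _ ω hD, zero_pow two_ne_zero]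
    positivity
  obtain ⟨k, hk, hDk⟩ := exists_sigmaSqNum_comp_succAbove_pos X ω hn hD
  refine ⟨k, hk, ?_⟩
  have hn' : (2 : ℝ) ≤ n := by exact_mod_cast hn
  have hT := tstat_sq_mul_sigmaSqNum X ω (n := n + 1) (by omega) hD
  have ht := tstat_sq_mul_sigmaSqNum (fun i => X (k.succAbove i)) ω hn hDk
  have hsplit := mul_sigmaSqNum_succ X ω hk
  rw [Sn_comp_succAbove X ω hk] at ht
  rw [Nat.cast_succ, add_sub_cancel_right] at hT
  set S := Sn X (n + 1) ω
  set a := X k ω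
  set D := sigmaSqNum X (n + 1) ω
  set Dk := sigmaSqNum (fun i => X (k.succAbove i)) n ω
  set T := Tstat X (n + 1) ω
  set t := Tstat (fun i => X (k.succAbove i)) n ω
  have hDk_le : Dk ≤ D := by nlinarith [sq_nonneg (S - (n + 1) * a)]
  have hdev : (S - (n + 1) * a) ^ 2 ≤ n * D := by nlinarith
  have hloo : (S - a) ^ 2 ≤ t ^ 2 * D := by
    nlinarith [sq_nonneg (S - a), mul_le_mul_of_nonneg_left hDk_le (sq_nonneg t)]
  have hmain : n * T ^ 2 * D ≤ (2 * (n + 1) ^ 2 * t ^ 2 + 2 * n) * D := calc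
    n * T ^ 2 * D = ((n + 1) * (S - a) - (S - (n + 1) * a)) ^ 2 := by rw [mul_assoc, hT]; ring
    _ ≤ 2 * (n + 1) ^ 2 * (S - a) ^ 2 + 2 * (S - (n + 1) * a) ^ 2 := by
      nlinarith [sq_nonneg ((n + 1) * (S - a) + (S - (n + 1) * a))]
    _ ≤ 2 * (n + 1) ^ 2 * (t ^ 2 * D) + 2 * (n * D) := by gcongr
    _ = (2 * (n + 1) ^ 2 * t ^ 2 + 2 * n) * D := by ring
  have hT_le := le_of_mul_le_mul_right hmain hD
  nlinarith [sq_nonneg t]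

lemma ENNReal.ofReal_abs_rpow_eq_ofReal_sq_rpow (x : ℝ) {r : ℝ} (hr : 0 ≤ r) :
    ENNReal.ofReal (|x| ^ r) = ENNReal.ofReal (x ^ 2) ^ (r / 2) := by
  rw [ENNReal.ofReal_rpow_of_nonneg (sq_nonneg x) (by positivity), ← sq_abs,
    ← Real.rpow_natCast, ← Real.rpow_mul (abs_nonneg x)]
  norm_num [mul_div_cancel₀]

lemma ENNReal.ofReal_abs_rpow_le_of_sq_le {x y c r : ℝ} (hr : 0 ≤ r)
    (h : x ^ 2 ≤ c * (1 + y ^ 2)) :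
    ENNReal.ofReal (|x| ^ r)
      ≤ (2 * ENNReal.ofReal c) ^ (r / 2) * (1 + ENNReal.ofReal (|y| ^ r)) := by
  have hp : 0 ≤ r / 2 := by positivity
  rw [ofReal_abs_rpow_eq_ofReal_sq_rpow x hr, ofReal_abs_rpow_eq_ofReal_sq_rpow y hr]
  calc ENNReal.ofReal (x ^ 2) ^ (r / 2)
      ≤ (ENNReal.ofReal c * (1 + ENNReal.ofReal (y ^ 2))) ^ (r / 2) := by
        rw [← ENNReal.ofReal_one, ← ENNReal.ofReal_add zero_le_one (sq_nonneg y),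
          ← ENNReal.ofReal_mul' (by positivity)]
        gcongr
    _ ≤ ENNReal.ofReal c ^ (r / 2) * (2 ^ (r / 2) * (1 + ENNReal.ofReal (y ^ 2) ^ (r / 2))) := by
        rw [ENNReal.mul_rpow_of_nonneg _ _ hp]
        gcongr
        simpa using ENNReal.add_rpow_le_two_rpow_mul_rpow_add_rpow 1 (ENNReal.ofReal (y ^ 2)) hp
    _ = (2 * ENNReal.ofReal c) ^ (r / 2) * (1 + ENNReal.ofReal (y ^ 2) ^ (r / 2)) := by
        rw [ENNReal.mul_rpow_of_nonneg _ _ hp]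
        ring

lemma ofReal_abs_tstat_succ_rpow_le {Ω : Type*} (X : ℕ → Ω → ℝ) {n : ℕ} (hn : 2 ≤ n)
    {r : ℝ} (hr : 0 ≤ r) (ω : Ω) :
    ENNReal.ofReal (|Tstat X (n + 1) ω| ^ r)
      ≤ (2 * ENNReal.ofReal ((n + 1) ^ 2)) ^ (r / 2)
        * (1 + ∑ k ∈ range (n + 1),
            ENNReal.ofReal (|Tstat (fun i => X (k.succAbove i)) n ω| ^ r)) := by
  obtain ⟨k, hk, hle⟩ := exists_tstat_succ_sq_le X hn ω
  refine (ENNReal.ofReal_abs_rpow_le_of_sq_le hr hle).trans ?_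
  have hterm := single_le_sum_of_canonicallyOrdered
    (f := fun j => ENNReal.ofReal (|Tstat (fun i => X (j.succAbove i)) n ω| ^ r)) (mem_range.2 hk)
  gcongr

lemma measurable_tstat {Ω : Type*} [MeasurableSpace Ω] {X : ℕ → Ω → ℝ}
    (hX : ∀ i, Measurable (X i)) (n : ℕ) : Measurable (Tstat X n) := by
  have hS : Measurable (Sn X n) := Finset.measurable_sum _ fun i _ => hX i
  have hσ : Measurable (sigmaSq X n) := by
    unfold sigmaSq
    fun_prop
  unfold Tstat
  exact Measurable.ite (measurableSet_lt measurable_const hσ) (by fun_prop) measurable_const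

lemma ProbabilityTheory.iIndepFun.identDistrib_comp_of_injective {Ω ι β : Type*}
    [MeasurableSpace Ω] [MeasurableSpace β] {P : Measure Ω} {X : ι → Ω → β}
    (hX : ∀ i, Measurable (X i)) (hindep : iIndepFun X P) {e : ι → ι} (he : e.Injective)
    (hident : ∀ i, IdentDistrib (X (e i)) (X i) P P) :
    IdentDistrib (fun ω i => X (e i) ω) (fun ω i => X i ω) P P where
  aemeasurable_fst := (measurable_pi_lambda _ fun i => hX (e i)).aemeasurable
  aemeasurable_snd := (measurable_pi_lambda _ hX).aemeasurable
  map_eq := by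
    rw [(hindep.precomp he).map_fun_eq_infinitePi_map fun i => hX (e i),
      hindep.map_fun_eq_infinitePi_map hX]
    exact congrArg _ (funext fun i => (hident i).map_eq)

lemma lintegral_ofReal_abs_tstat_comp_rpow {Ω : Type*} [MeasurableSpace Ω] {P : Measure Ω}
    {X : ℕ → Ω → ℝ} (hX : ∀ i, Measurable (X i)) (hindep : iIndepFun X P)
    (hident : ∀ i, IdentDistrib (X i) (X 0) P P) {e : ℕ → ℕ} (he : e.Injective) (n : ℕ)
    (r : ℝ) :
    ∫⁻ ω, ENNReal.ofReal (|Tstat (fun i => X (e i)) n ω| ^ r) ∂P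
      = ∫⁻ ω, ENNReal.ofReal (|Tstat X n ω| ^ r) ∂P := by
  have hF : Measurable fun a : ℕ → ℝ => ENNReal.ofReal (|Tstat (fun i a => a i) n a| ^ r) := by
    have hT := measurable_tstat (X := fun i (a : ℕ → ℝ) => a i) measurable_pi_apply n
    fun_prop
  exact ((hindep.identDistrib_comp_of_injective hX he
    fun i => (hident (e i)).trans (hident i).symm).comp hF).lintegral_eq

/-- Theorem 2 (Theorem `thm-next`): for i.i.d. `X_i`, `n ≥ 2` and `r > 0`, if `E|T_n|^r`
is finite then so is `E|T_{n+1}|^r`. -/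
theorem lintegral_tstat_succ_lt_top {Ω : Type*} [MeasurableSpace Ω]
    (P : Measure Ω) [IsProbabilityMeasure P]
    (X : ℕ → Ω → ℝ) (hmeas : ∀ i, Measurable (X i))
    (hindep : iIndepFun X P)
    (hident : ∀ i, IdentDistrib (X i) (X 0) P P)
    (n : ℕ) (hn : 2 ≤ n) (r : ℝ) (hr : 0 < r)
    (hfin : (∫⁻ ω, ENNReal.ofReal (|Tstat X n ω| ^ r) ∂P) < ⊤) :
    (∫⁻ ω, ENNReal.ofReal (|Tstat X (n + 1) ω| ^ r) ∂P) < ⊤ := by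
  set C := (2 * ENNReal.ofReal ((n + 1) ^ 2)) ^ (r / 2)
  have hC : C ≠ ⊤ := ENNReal.rpow_ne_top_of_nonneg (by positivity) (by finiteness)
  set g : ℕ → Ω → ENNReal := fun k ω =>
    ENNReal.ofReal (|Tstat (fun i => X (k.succAbove i)) n ω| ^ r)
  have hg_meas (k : ℕ) : Measurable (g k) := by
    have hT := measurable_tstat (fun i => hmeas (k.succAbove i)) n
    fun_prop
  have hg_int (k : ℕ) : ∫⁻ ω, g k ω ∂P = ∫⁻ ω, ENNReal.ofReal (|Tstat X n ω| ^ r) ∂P :=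
    lintegral_ofReal_abs_tstat_comp_rpow hmeas hindep hident (Nat.succAbove_injective k) n r
  calc ∫⁻ ω, ENNReal.ofReal (|Tstat X (n + 1) ω| ^ r) ∂P
      ≤ ∫⁻ ω, C * (1 + ∑ k ∈ range (n + 1), g k ω) ∂P :=
        lintegral_mono fun ω => ofReal_abs_tstat_succ_rpow_le X hn hr.le ω
    _ = C * (1 + (n + 1) * ∫⁻ ω, ENNReal.ofReal (|Tstat X n ω| ^ r) ∂P) := by
        rw [lintegral_const_mul' _ _ hC, lintegral_add_left measurable_const,
          lintegral_finsetSum _ fun k _ => hg_meas k]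
        simp [hg_int]
    _ < ⊤ := by finiteness

end
end

section
/- Suppose the common distribution F of the X_i is continuous (atomless), and let n ≥ 2 and r > 0. If E|T_n|^r < ∞, then there exists a constant C > 0 such that q(h) ≤ C·h^{r/n} for all h ∈ (0,1]. -/
open MeasureTheory ProbabilityTheory Filter

noncomputable section

/-! If `h ≤ 1/2` and all of `X_1, …, X_n` lie in `B = {y : |y - x| ≤ |x| h}`, then
`|S_n| ≥ n|x|/2` while every `|X_i - S_n/n| ≤ 2|x|h`, which forces `|T_n| ≥ 1/(4h)` as soon as
`σ̂_n > 0`. Since `μ` has no atoms, `X_1 ≠ X_2` almost surely, so `σ̂_n > 0` almost surely and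
the junk value `T_n = 0` plays no role. By independence and Markov's inequality,
`μ(B)^n ≤ P(|T_n| ≥ 1/(4h)) ≤ (4h)^r E|T_n|^r`; taking `n`-th roots gives the bound, and for
`h > 1/2` it is trivial. -/

lemma ProbabilityTheory.IndepFun.ae_ne {Ω : Type*} [MeasurableSpace Ω] {P : Measure Ω}
    [IsFiniteMeasure P] {Y Z : Ω → ℝ} (hYZ : IndepFun Y Z P) (hY : Measurable Y)
    (hZ : Measurable Z) [NullSingletonClass (P.map Z)] : ∀ᵐ ω ∂P, Y ω ≠ Z ω := by
  have hD : MeasurableSet {p : ℝ × ℝ | p.1 = p.2} :=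
    measurableSet_eq_fun measurable_fst measurable_snd
  have hslice (a : ℝ) : Prod.mk a ⁻¹' {p : ℝ × ℝ | p.1 = p.2} = {a} := by
    ext; simp [eq_comm]
  rw [ae_iff]
  simp only [not_not]
  change P ((fun ω => (Y ω, Z ω)) ⁻¹' {p : ℝ × ℝ | p.1 = p.2}) = 0
  rw [← Measure.map_apply (hY.prodMk hZ) hD,
    (indepFun_iff_map_prod_eq_prod_map_map hY.aemeasurable hZ.aemeasurable).1 hYZ,
    Measure.prod_apply hD]
  simp [hslice]

lemma le_ofReal_rpow_of_pow_le {a : ENNReal} {n : ℕ} (hn : n ≠ 0) {K h r : ℝ} (hK : 0 ≤ K)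
    (hh : 0 ≤ h) (ha : a ^ n ≤ ENNReal.ofReal (K * h ^ r)) :
    a ≤ ENNReal.ofReal (K ^ (n : ℝ)⁻¹ * h ^ (r / n)) :=
  calc a = (a ^ n) ^ (n⁻¹ : ℝ) := (ENNReal.pow_rpow_inv_natCast hn a).symm
    _ ≤ ENNReal.ofReal (K * h ^ r) ^ (n⁻¹ : ℝ) := ENNReal.rpow_le_rpow ha (by positivity)
    _ = ENNReal.ofReal (K ^ (n : ℝ)⁻¹ * h ^ (r / n)) := by
      rw [ENNReal.ofReal_rpow_of_nonneg (by positivity) (by positivity),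
        Real.mul_rpow hK (by positivity), ← Real.rpow_mul hh, div_eq_mul_inv]

section Deterministic

open Finset

variable {Ω : Type*} {X : ℕ → Ω → ℝ} {n : ℕ} {ω : Ω} {x δ h : ℝ}

lemma abs_sn_sub_le (hX : ∀ i ∈ range n, |X i ω - x| ≤ δ) : |Sn X n ω - n * x| ≤ n * δ := by
  have hsum : Sn X n ω - n * x = ∑ i ∈ range n, (X i ω - x) := by
    simp [Sn, sum_sub_distrib]
  calc |Sn X n ω - n * x| ≤ ∑ i ∈ range n, |X i ω - x| := hsum ▸ abs_sum_le_sum_abs _ _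
    _ ≤ ∑ _i ∈ range n, δ := sum_le_sum hX
    _ = n * δ := by simp

lemma abs_sub_sn_div_le (hn : 0 < n) (hX : ∀ i ∈ range n, |X i ω - x| ≤ δ) {i : ℕ}
    (hi : i ∈ range n) : |X i ω - Sn X n ω / n| ≤ 2 * δ := by
  have hn' : (0 : ℝ) < n := by exact_mod_cast hn
  have hmean : |x - Sn X n ω / n| ≤ δ := by
    rw [abs_sub_comm, ← mul_le_mul_iff_of_pos_left hn', ← abs_of_pos hn', ← abs_mul,
      abs_of_pos hn', mul_sub, mul_div_cancel₀ _ hn'.ne']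
    exact abs_sn_sub_le hX
  calc |X i ω - Sn X n ω / n| ≤ |X i ω - x| + |x - Sn X n ω / n| := abs_sub_le _ _ _
    _ ≤ 2 * δ := by linarith [hX i hi]

lemma sigmaSq_le (hn : 2 ≤ n) (hX : ∀ i ∈ range n, |X i ω - x| ≤ δ) :
    sigmaSq X n ω ≤ 8 * δ ^ 2 := by
  have hn' : (2 : ℝ) ≤ n := by exact_mod_cast hn
  have hsum : ∑ i ∈ range n, (X i ω - Sn X n ω / n) ^ 2 ≤ n * (2 * δ) ^ 2 := by
    calc ∑ i ∈ range n, (X i ω - Sn X n ω / n) ^ 2 ≤ ∑ _i ∈ range n, (2 * δ) ^ 2 :=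
          sum_le_sum fun i hi => sq_le_sq' (abs_le.1 (abs_sub_sn_div_le (by omega) hX hi)).1
            (abs_le.1 (abs_sub_sn_div_le (by omega) hX hi)).2
      _ = n * (2 * δ) ^ 2 := by simp
  rw [sigmaSq, one_div, inv_mul_le_iff₀ (by linarith)]
  nlinarith [sq_nonneg δ]

lemma tstat_sq (hσ : 0 < sigmaSq X n ω) :
    Tstat X n ω ^ 2 = Sn X n ω ^ 2 / (n * sigmaSq X n ω) := by
  rw [Tstat, if_pos hσ, div_pow, mul_pow, Real.sq_sqrt (Nat.cast_nonneg n), Real.sq_sqrt hσ.le]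

lemma one_le_four_mul_mul_abs_tstat (hn : 2 ≤ n) (hh0 : 0 ≤ h) (hh : h ≤ 1 / 2)
    (hX : ∀ i ∈ range n, |X i ω - x| ≤ |x| * h) (hσ : 0 < sigmaSq X n ω) :
    1 ≤ 4 * h * |Tstat X n ω| := by
  have hn' : (2 : ℝ) ≤ n := by exact_mod_cast hn
  have hS : n * |x| / 2 ≤ |Sn X n ω| := by
    have := abs_sub_abs_le_abs_sub (n * x) (Sn X n ω)
    rw [abs_sub_comm, abs_mul, Nat.abs_cast] at this
    nlinarith [abs_sn_sub_le hX,
      mul_le_mul_of_nonneg_left hh (by positivity : (0 : ℝ) ≤ n * |x|)]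
  have hσS : n * sigmaSq X n ω ≤ (4 * h) ^ 2 * Sn X n ω ^ 2 := by
    calc n * sigmaSq X n ω ≤ n * (8 * (|x| * h) ^ 2) := by
          gcongr; exact sigmaSq_le hn hX
      _ ≤ (4 * h) ^ 2 * (n * |x| / 2) ^ 2 := by
          nlinarith [mul_nonneg (mul_nonneg (by positivity : (0 : ℝ) ≤ n) (sq_nonneg (|x| * h)))
            (by linarith : (0 : ℝ) ≤ n - 2)]
      _ ≤ (4 * h) ^ 2 * Sn X n ω ^ 2 := by
          rw [← sq_abs (Sn X n ω)]; gcongr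
  have hsq : 1 ≤ (4 * h * |Tstat X n ω|) ^ 2 := by
    rw [mul_pow, sq_abs, tstat_sq hσ, mul_div_assoc', le_div_iff₀ (by positivity), one_mul]
    exact hσS
  rwa [one_le_sq_iff_one_le_abs, abs_of_nonneg (by positivity)] at hsq

lemma sigmaSq_pos_of_ne {i j : ℕ} (hi : i ∈ range n) (hj : j ∈ range n)
    (hne : X i ω ≠ X j ω) : 0 < sigmaSq X n ω := by
  have hij : i ≠ j := fun h => hne (h ▸ rfl)
  have hn : (1 : ℝ) < n := by
    rw [mem_range] at hi hj
    exact_mod_cast (by omega : 1 < n)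
  refine mul_pos (one_div_pos.2 (by linarith)) (sum_pos' (fun k _ => sq_nonneg _) ?_)
  by_cases hm : X i ω = Sn X n ω / n
  · exact ⟨j, hj, sq_pos_of_ne_zero (sub_ne_zero.2 (hm ▸ hne.symm))⟩
  · exact ⟨i, hi, sq_pos_of_ne_zero (sub_ne_zero.2 hm)⟩

end Deterministic

open Finset in
lemma measure_pow_le_mul_lintegral_tstat {Ω : Type*} [MeasurableSpace Ω] {P : Measure Ω}
    [IsProbabilityMeasure P] {X : ℕ → Ω → ℝ} {μ : Measure ℝ} {n : ℕ} {h r : ℝ}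
    (hmeas : ∀ i, Measurable (X i)) (hindep : iIndepFun X P) (hdist : ∀ i, P.map (X i) = μ)
    (hn : 2 ≤ n) (hσ : ∀ᵐ ω ∂P, 0 < sigmaSq X n ω) (hr : 0 ≤ r) (x : ℝ) (hh0 : 0 ≤ h)
    (hh : h ≤ 1 / 2) :
    μ {y | |y - x| ≤ |x| * h} ^ n ≤
      ENNReal.ofReal ((4 * h) ^ r) * ∫⁻ ω, ENNReal.ofReal (|Tstat X n ω| ^ r) ∂P := by
  set B := {y : ℝ | |y - x| ≤ |x| * h}
  have hB : MeasurableSet B := measurableSet_le (by fun_prop) measurable_const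
  set A := ⋂ i ∈ range n, X i ⁻¹' B
  have hA : MeasurableSet A := .biInter (range n).countable_toSet fun i _ => hmeas i hB
  have hPA : P A = μ B ^ n := by
    rw [hindep.measure_inter_preimage_eq_mul _ fun i _ => hB]
    have hXB (i : ℕ) : P (X i ⁻¹' B) = μ B := by
      rw [← hdist i, Measure.map_apply (hmeas i) hB]
    simp only [hXB, prod_const, card_range]
  have hmarkov : ∀ᵐ ω ∂P, A.indicator 1 ω ≤
      ENNReal.ofReal ((4 * h) ^ r) * ENNReal.ofReal (|Tstat X n ω| ^ r) := by
    filter_upwards [hσ] with ω hω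
    by_cases hωA : ω ∈ A
    · rw [Set.indicator_of_mem hωA, Pi.one_apply, ← ENNReal.ofReal_mul (by positivity),
        ← Real.mul_rpow (by positivity) (abs_nonneg _), ← ENNReal.ofReal_one]
      have hωB : ∀ i ∈ range n, |X i ω - x| ≤ |x| * h := fun i hi => Set.mem_iInter₂.1 hωA i hi
      exact ENNReal.ofReal_le_ofReal
        (Real.one_le_rpow (one_le_four_mul_mul_abs_tstat hn hh0 hh hωB hω) hr)
    · simp [hωA]
  calc μ B ^ n = ∫⁻ ω, A.indicator 1 ω ∂P := by rw [lintegral_indicator_one hA, hPA]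
    _ ≤ ∫⁻ ω, ENNReal.ofReal ((4 * h) ^ r) * ENNReal.ofReal (|Tstat X n ω| ^ r) ∂P :=
      lintegral_mono_ae hmarkov
    _ = _ := lintegral_const_mul' _ _ ENNReal.ofReal_ne_top

/-- Theorem 4(ii) (Theorem `thm3`(ii)): if the common distribution `μ` of the i.i.d. `X_i`
is atomless and `E|T_n|^r < ∞`, then the concentration function satisfies
`q(h) ≤ C·h^{r/n}` on `(0,1]` for some constant `C > 0`. -/
theorem concentration_le_of_lintegral_tstat_lt_top {Ω : Type*} [MeasurableSpace Ω]
    (P : Measure Ω) [IsProbabilityMeasure P]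
    (X : ℕ → Ω → ℝ) (hmeas : ∀ i, Measurable (X i))
    (hindep : iIndepFun X P)
    (μ : Measure ℝ) (hdist : ∀ i, P.map (X i) = μ)
    (hcont : ∀ x : ℝ, μ {x} = 0)
    (n : ℕ) (hn : 2 ≤ n) (r : ℝ) (hr : 0 < r)
    (hfin : (∫⁻ ω, ENNReal.ofReal (|Tstat X n ω| ^ r) ∂P) < ⊤) :
    ∃ C : ℝ, 0 < C ∧ ∀ h ∈ Set.Ioc (0 : ℝ) 1, ∀ x : ℝ,
      μ {y | |y - x| ≤ |x| * h} ≤ ENNReal.ofReal (C * h ^ (r / n)) := by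
  have : IsProbabilityMeasure μ :=
    hdist 0 ▸ Measure.isProbabilityMeasure_map (hmeas 0).aemeasurable
  have : NullSingletonClass (P.map (X 1)) := hdist 1 ▸ ⟨hcont⟩
  have hσ : ∀ᵐ ω ∂P, 0 < sigmaSq X n ω :=
    ((hindep.indepFun zero_ne_one).ae_ne (hmeas 0) (hmeas 1)).mono fun ω hω =>
      sigmaSq_pos_of_ne (Finset.mem_range.2 (by omega)) (Finset.mem_range.2 (by omega)) hω
  set M := ∫⁻ ω, ENNReal.ofReal (|Tstat X n ω| ^ r) ∂P
  have hM : M ≤ ENNReal.ofReal (M.toReal + 1) :=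
    (ENNReal.le_ofReal_iff_toReal_le hfin.ne (by positivity)).2 (by linarith)
  refine ⟨(4 ^ r * (M.toReal + 1)) ^ (n : ℝ)⁻¹, by positivity, fun h ⟨hh0, _⟩ x => ?_⟩
  refine le_ofReal_rpow_of_pow_le (by omega) (by positivity) hh0.le ?_
  rw [mul_right_comm, ← Real.mul_rpow zero_le_four hh0.le]
  rcases le_or_gt h (1 / 2) with hh | hh
  · calc _ ≤ ENNReal.ofReal ((4 * h) ^ r) * M :=
          measure_pow_le_mul_lintegral_tstat hmeas hindep hdist hn hσ hr.le x hh0.le hh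
      _ ≤ ENNReal.ofReal ((4 * h) ^ r) * ENNReal.ofReal (M.toReal + 1) := by gcongr
      _ = _ := (ENNReal.ofReal_mul (by positivity)).symm
  · calc _ ≤ 1 := pow_le_one₀ zero_le prob_le_one
      _ ≤ _ := ENNReal.one_le_ofReal.2 (one_le_mul_of_one_le_of_one_le
          (Real.one_le_rpow (by linarith) hr.le)
          (le_add_of_nonneg_left ENNReal.toReal_nonneg))

end
end
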